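/- arXiv:2401.06027 — 3 statements merged into one kernel-verified Lean document; each statement's English description precedes it below -/
import Mathlib

section
/- For any graph G, each of the ideals L_G, J_G, and ⟨[I_G]₂⟩ has saturation with respect to x_∅ equal to I_G: L_G : x_∅^∞ = J_G : x_∅^∞ = ⟨[I_G]₂⟩ : x_∅^∞ = I_G. -/
open MvPolynomial

section KempePrelim

variable {V : Type} 

/-- A proper `k`-coloring. -/
def IsColoring (G : SimpleGraph V) (k : ℕ) (f : V → Fin k) : Prop :=
  ∀ ⦃u v : V⦄, G.Adj u v → f u ≠ f v

/-- `g` is obtained from `f` by a Kempe switching: swap colors `i` and `j` on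
one connected component of the subgraph induced on `f⁻¹(i) ∪ f⁻¹(j)`. -/
def KempeSwitch (G : SimpleGraph V) {k : ℕ} (f g : V → Fin k) : Prop :=
  ∃ i j : Fin k, ∃ C : Set V,
    (∃ comp : (G.induce {v | f v = i ∨ f v = j}).ConnectedComponent,
      C = Subtype.val '' comp.supp) ∧
    (∀ v ∈ C, (f v = i → g v = j) ∧ (f v = j → g v = i)) ∧
    (∀ v ∉ C, g v = f v)

/-- A single step of Kempe equivalence between proper `k`-colorings. -/
def KempeStep (G : SimpleGraph V) {k : ℕ} (f g : V → Fin k) : Prop :=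
  IsColoring G k f ∧ IsColoring G k g ∧ KempeSwitch G f g

/-- Kempe equivalence of `k`-colorings. -/
def KempeEquiv (G : SimpleGraph V) {k : ℕ} (f g : V → Fin k) : Prop :=
  Relation.ReflTransGen (KempeStep G) f g

/-- The type of proper `k`-colorings of `G`. -/
def ProperColoring (G : SimpleGraph V) (k : ℕ) : Type _ :=
  {f : V → Fin k // IsColoring G k f}

/-- The number of Kempe classes of `k`-colorings of `G`. -/
noncomputable def Kc (G : SimpleGraph V) (k : ℕ) : ℕ :=
  Nat.card (Quot (fun f g : ProperColoring G k => KempeEquiv G f.1 g.1))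

/-- The stable (independent) sets of `G`, as a type indexing variables. -/
def StableSet (G : SimpleGraph V) : Type _ :=
  {s : Finset V // ∀ ⦃i⦄, i ∈ s → ∀ ⦃j⦄, j ∈ s → ¬ G.Adj i j}

def emptyStable (G : SimpleGraph V) : StableSet G :=
  ⟨∅, by intro i hi; simp at hi⟩

def singleStable (G : SimpleGraph V) (i : V) : StableSet G :=
  ⟨{i}, by
    intro a ha b hb
    simp only [Finset.mem_singleton] at ha hb
    rw [ha, hb]
    exact G.loopless.irrefl i⟩

def eraseStable (G : SimpleGraph V) [DecidableEq V] (S : StableSet G) (i : V) : StableSet G :=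
  ⟨S.1.erase i, fun _ ha _ hb => S.2 (Finset.mem_of_mem_erase ha) (Finset.mem_of_mem_erase hb)⟩

variable (K : Type) [Field K]

/-- The monoid algebra map `x_S ↦ t^{ρ(S)} s`, into `K[t₁,…,t_d,s]`
(realized as `MvPolynomial (Option V) K`, with `none` playing the role of `s`). -/
noncomputable def piMap (G : SimpleGraph V) :
    MvPolynomial (StableSet G) K →ₐ[K] MvPolynomial (Option V) K :=
  aeval fun S : StableSet G => (∏ i ∈ S.1, X (some i)) * X (none : Option V)

/-- The toric ideal `I_G` of the stable set ring. -/
noncomputable def toricIdeal (G : SimpleGraph V) : Ideal (MvPolynomial (StableSet G) K) :=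
  RingHom.ker (piMap K G).toRingHom

/-- The ideal `L_G`. -/
noncomputable def idealL (G : SimpleGraph V) [DecidableEq V] :
    Ideal (MvPolynomial (StableSet G) K) :=
  Ideal.span {p | ∃ (S : StableSet G) (i : V), i ∈ S.1 ∧ 2 ≤ S.1.card ∧
    p = X (eraseStable G S i) * X (singleStable G i) - X S * X (emptyStable G)}

/-- The 2-coloring ideal `J_G`. -/
noncomputable def idealJ (G : SimpleGraph V) [DecidableEq V] :
    Ideal (MvPolynomial (StableSet G) K) :=
  Ideal.span {p | ∃ S₁ S₂ S₃ S₄ : StableSet G,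
    Disjoint S₁.1 S₂.1 ∧ Disjoint S₃.1 S₄.1 ∧ S₁.1 ∪ S₂.1 = S₃.1 ∪ S₄.1 ∧
    p = X S₁ * X S₂ - X S₃ * X S₄}

/-- The ideal `⟨[I_G]₂⟩` generated by all quadratic binomials of `I_G`. -/
noncomputable def quadPart (G : SimpleGraph V) : Ideal (MvPolynomial (StableSet G) K) :=
  Ideal.span {p | (∃ S₁ S₂ S₃ S₄ : StableSet G, p = X S₁ * X S₂ - X S₃ * X S₄) ∧
    p ∈ toricIdeal K G}

/-- The monomial ideal `M_G`. -/
noncomputable def idealM (G : SimpleGraph V) [DecidableEq V] :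
    Ideal (MvPolynomial (StableSet G) K) :=
  Ideal.span {p | ∃ S T : StableSet G, (S.1 ∩ T.1).Nonempty ∧ p = X S * X T}

/-- The Kempe ideal `K_G = J_G + M_G`. -/
noncomputable def kempeIdeal (G : SimpleGraph V) [DecidableEq V] :
    Ideal (MvPolynomial (StableSet G) K) :=
  idealJ K G + idealM K G

/-- The color class of a proper coloring, as a stable set. -/
def colorClass (G : SimpleGraph V) [Fintype V] [DecidableEq V] {k : ℕ}
    (f : V → Fin k) (hf : IsColoring G k f) (c : Fin k) : StableSet G :=
  ⟨Finset.univ.filter (fun v => f v = c), by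
    intro a ha b hb hadj
    simp only [Finset.mem_filter] at ha hb
    exact hf hadj (ha.2.trans hb.2.symm)⟩

/-- The monomial `x_f` associated with a proper `k`-coloring `f`. -/
noncomputable def xMonomial (G : SimpleGraph V) [Fintype V] [DecidableEq V] {k : ℕ}
    (f : V → Fin k) (hf : IsColoring G k f) : MvPolynomial (StableSet G) K :=
  ∏ c : Fin k, X (colorClass G f hf c)

/-- The Hilbert function `k ↦ dim_K (R/I)_k` of a quotient of `R[G]`. -/
noncomputable def hilbertFn (G : SimpleGraph V)
    (I : Ideal (MvPolynomial (StableSet G) K)) (k : ℕ) : ℕ :=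
  Module.finrank K (Submodule.map (Ideal.Quotient.mkₐ K I).toLinearMap
    (homogeneousSubmodule (StableSet G) K k))

end KempePrelim

/-!
Every ideal `I` between `L_G` and `I_G` has saturation `I_G`. Since `x_∅` maps to the variable
`s` of the domain `K[t, s]`, it is a nonzerodivisor modulo `I_G`, so `I : x_∅^∞ ⊆ I_G`.
Conversely, the binomials of `L_G` let one trade `x_S x_∅` for `x_{S ∖ i} x_{i}`, so
`x_S x_∅^{|S|} ≡ x_∅ ∏_{i ∈ S} x_{i}` modulo `L_G`; hence a power of `x_∅` moves every
polynomial, modulo `L_G`, into the subalgebra generated by `x_∅` and the singletons `x_{i}`.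
On that subalgebra the parametrization is `s ↦ s, t_i ↦ t_i s`, which is injective, so an
element of `I_G` lands on `0`.
-/

/-- The substitution `s ↦ s, t_i ↦ t_i s` on `R[t, s]`, with `s = X none` and `t_i = X (some i)`. -/
noncomputable def coneMap (σ R : Type*) [CommRing R] :
    MvPolynomial (Option σ) R →ₐ[R] MvPolynomial (Option σ) R :=
  aeval fun o => Option.elim o (X none) fun i => X (some i) * X none

@[simp]
theorem coneMap_X_none {σ : Type*} (R : Type*) [CommRing R] : coneMap σ R (X none) = X none :=
  aeval_X _ _

@[simp]
theorem coneMap_X_some {σ : Type*} (R : Type*) [CommRing R] (i : σ) :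
    coneMap σ R (X (some i)) = X (some i) * X none :=
  aeval_X _ _

theorem coneMap_injective (σ R : Type*) [CommRing R] [IsDomain R] :
    Function.Injective (coneMap σ R) := by
  have hinj := IsFractionRing.injective (MvPolynomial (Option σ) R)
    (FractionRing (MvPolynomial (Option σ) R))
  set ι := algebraMap (MvPolynomial (Option σ) R) (FractionRing (MvPolynomial (Option σ) R))
  have hs : ι (X none) ≠ 0 := (map_ne_zero_iff _ hinj).2 (X_ne_zero _)
  -- `t_i ↦ t_i / s` inverts `coneMap` inside the fraction field.
  let ψ := aeval (R := R) fun o => Option.elim o (ι (X none)) fun i => ι (X (some i)) / ι (X none)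
  have hψ : ∀ p, ψ (coneMap σ R p) = ι p := by
    suffices ψ.comp (coneMap σ R) = IsScalarTower.toAlgHom R _ _ from fun p => congr($this p)
    ext (_ | i) <;> simp [ψ, ι, div_mul_cancel₀ _ hs]
  exact fun p q h => hinj (by rw [← hψ, h, hψ])

section Saturation

variable {V : Type} {G : SimpleGraph V} {K : Type} [Field K]

theorem piMap_X (S : StableSet G) :
    piMap K G (X S) = (∏ i ∈ S.1, X (some i)) * X none :=
  aeval_X _ S

theorem piMap_X_emptyStable : piMap K G (X (emptyStable G)) = X none :=
  (piMap_X _).trans (by simp [emptyStable])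

theorem piMap_X_singleStable (i : V) :
    piMap K G (X (singleStable G i)) = X (some i) * X none :=
  (piMap_X _).trans (by simp [singleStable])

theorem mem_toricIdeal_iff {p : MvPolynomial (StableSet G) K} :
    p ∈ toricIdeal K G ↔ piMap K G p = 0 :=
  Iff.rfl

theorem mem_toricIdeal_of_X_emptyStable_pow_mul_mem {n : ℕ} {p : MvPolynomial (StableSet G) K}
    (h : X (emptyStable G) ^ n * p ∈ toricIdeal K G) : p ∈ toricIdeal K G := by
  rw [mem_toricIdeal_iff, map_mul, map_pow, piMap_X_emptyStable] at h
  exact (mul_eq_zero.mp h).resolve_left (pow_ne_zero _ (X_ne_zero _))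

theorem quadPart_le_toricIdeal : quadPart K G ≤ toricIdeal K G :=
  Ideal.span_le.mpr fun _ hp => hp.2

variable (G K) in
noncomputable def singletonMap : MvPolynomial (Option V) K →ₐ[K] MvPolynomial (StableSet G) K :=
  aeval fun o => Option.elim o (X (emptyStable G)) fun i => X (singleStable G i)

theorem piMap_comp_singletonMap : (piMap K G).comp (singletonMap G K) = coneMap V K := by
  ext (_ | i) <;> simp [singletonMap, piMap_X_emptyStable, piMap_X_singleStable]

variable [DecidableEq V]

theorem X_mul_X_sub_X_mul_X_mem_toricIdeal {S₁ S₂ S₃ S₄ : StableSet G}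
    (h₁₂ : Disjoint S₁.1 S₂.1) (h₃₄ : Disjoint S₃.1 S₄.1) (h : S₁.1 ∪ S₂.1 = S₃.1 ∪ S₄.1) :
    X S₁ * X S₂ - X S₃ * X S₄ ∈ toricIdeal K G := by
  rw [mem_toricIdeal_iff, map_sub, map_mul, map_mul, piMap_X, piMap_X, piMap_X, piMap_X,
    sub_eq_zero, mul_mul_mul_comm, ← Finset.prod_union h₁₂, h, Finset.prod_union h₃₄,
    mul_mul_mul_comm]

theorem idealJ_le_quadPart : idealJ K G ≤ quadPart K G := by
  refine Ideal.span_le.mpr ?_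
  rintro _ ⟨S₁, S₂, S₃, S₄, h₁₂, h₃₄, h, rfl⟩
  exact Ideal.subset_span ⟨⟨S₁, S₂, S₃, S₄, rfl⟩, X_mul_X_sub_X_mul_X_mem_toricIdeal h₁₂ h₃₄ h⟩

theorem idealL_le_idealJ : idealL K G ≤ idealJ K G := by
  refine Ideal.span_le.mpr ?_
  rintro _ ⟨S, i, hi, -, rfl⟩
  refine Ideal.subset_span ⟨_, _, _, _, ?_, ?_, ?_, rfl⟩ <;>
    simp [eraseStable, singleStable, emptyStable, Finset.insert_erase hi]

theorem idealL_le_toricIdeal : idealL K G ≤ toricIdeal K G :=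
  idealL_le_idealJ.trans (idealJ_le_quadPart.trans quadPart_le_toricIdeal)

/-- For `|S| = 1` both sides coincide, so the restriction `2 ≤ |S|` in `L_G` is harmless. -/
theorem X_eraseStable_mul_X_singleStable_smodEq {S : StableSet G} {i : V} (hi : i ∈ S.1) :
    X (eraseStable G S i) * X (singleStable G i) ≡ X S * X (emptyStable G)
      [SMOD idealL K G] := by
  rw [SModEq.sub_mem]
  by_cases hcard : 2 ≤ S.1.card
  · exact Ideal.subset_span ⟨S, i, hi, hcard, rfl⟩
  have hS : S.1 = {i} := Finset.eq_singleton_iff_unique_mem.mpr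
    ⟨hi, fun j hj => Finset.card_le_one.mp (by omega) j hj i hi⟩
  obtain rfl : S = singleStable G i := Subtype.ext hS
  have hE : eraseStable G (singleStable G i) i = emptyStable G := Subtype.ext (by
    simp [eraseStable, singleStable, emptyStable])
  rw [hE, mul_comm, sub_self]
  exact zero_mem _

theorem X_mul_X_emptyStable_pow_card_smodEq (S : StableSet G) :
    X S * X (emptyStable G) ^ S.1.card ≡ X (emptyStable G) * ∏ i ∈ S.1, X (singleStable G i)
      [SMOD idealL K G] := by
  obtain ⟨n, hn⟩ : ∃ n, S.1.card = n := ⟨_, rfl⟩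
  induction n generalizing S with
  | zero =>
    obtain rfl : S = emptyStable G := Subtype.ext (Finset.card_eq_zero.mp hn)
    simp [emptyStable, mul_comm]
  | succ n ih =>
    obtain ⟨i, hi⟩ := Finset.card_pos.mp (by omega : 0 < S.1.card)
    have hE : (eraseStable G S i).1.card = n := by
      simp [eraseStable, Finset.card_erase_of_mem hi, hn]
    rw [hn]
    calc X S * X (emptyStable G) ^ (n + 1)
        = X S * X (emptyStable G) * X (emptyStable G) ^ n := by ring
      _ ≡ X (eraseStable G S i) * X (singleStable G i) * X (emptyStable G) ^ n
          [SMOD idealL K G] := (X_eraseStable_mul_X_singleStable_smodEq hi).symm.mul SModEq.rfl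
      _ = X (singleStable G i) * (X (eraseStable G S i) * X (emptyStable G) ^ n) := by ring
      _ ≡ X (singleStable G i) *
            (X (emptyStable G) * ∏ j ∈ (eraseStable G S i).1, X (singleStable G j))
          [SMOD idealL K G] := SModEq.rfl.mul (hE ▸ ih _ hE)
      _ = X (emptyStable G) * ∏ j ∈ S.1, X (singleStable G j) := by
        rw [← Finset.mul_prod_erase S.1 _ hi]
        simp only [eraseStable]
        ring

theorem exists_X_emptyStable_pow_mul_smodEq_singletonMap (p : MvPolynomial (StableSet G) K) :
    ∃ (N : ℕ) (r : MvPolynomial (Option V) K),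
      X (emptyStable G) ^ N * p ≡ singletonMap G K r [SMOD idealL K G] := by
  induction p using MvPolynomial.induction_on with
  | C a => exact ⟨0, C a, by simp⟩
  | add p q hp hq =>
    obtain ⟨M, r, hr⟩ := hp
    obtain ⟨N, r', hr'⟩ := hq
    refine ⟨M + N, X none ^ N * r + X none ^ M * r', ?_⟩
    calc X (emptyStable G) ^ (M + N) * (p + q)
        = X (emptyStable G) ^ N * (X (emptyStable G) ^ M * p)
          + X (emptyStable G) ^ M * (X (emptyStable G) ^ N * q) := by ring
      _ ≡ X (emptyStable G) ^ N * singletonMap G K r + X (emptyStable G) ^ M * singletonMap G K r'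
          [SMOD idealL K G] := (SModEq.rfl.mul hr).add (SModEq.rfl.mul hr')
      _ = singletonMap G K (X none ^ N * r + X none ^ M * r') := by simp [singletonMap]
  | mul_X p S hp =>
    obtain ⟨N, r, hr⟩ := hp
    refine ⟨N + S.1.card, r * (X none * ∏ i ∈ S.1, X (some i)), ?_⟩
    calc X (emptyStable G) ^ (N + S.1.card) * (p * X S)
        = X (emptyStable G) ^ N * p * (X S * X (emptyStable G) ^ S.1.card) := by ring
      _ ≡ singletonMap G K r * (X (emptyStable G) * ∏ i ∈ S.1, X (singleStable G i))
          [SMOD idealL K G] := hr.mul (X_mul_X_emptyStable_pow_card_smodEq S)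
      _ = singletonMap G K (r * (X none * ∏ i ∈ S.1, X (some i))) := by simp [singletonMap]

theorem exists_X_emptyStable_pow_mul_mem_idealL {p : MvPolynomial (StableSet G) K}
    (hp : p ∈ toricIdeal K G) : ∃ n, 0 < n ∧ X (emptyStable G) ^ n * p ∈ idealL K G := by
  obtain ⟨N, r, hr⟩ := exists_X_emptyStable_pow_mul_smodEq_singletonMap p
  have hr_mem : singletonMap G K r ∈ toricIdeal K G :=
    (Submodule.sub_mem_iff_left _ (Ideal.mul_mem_left _ _ hp)).mp
      (idealL_le_toricIdeal (SModEq.sub_mem.mp hr.symm))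
  obtain rfl : r = 0 := coneMap_injective V K (by
    rw [map_zero, ← piMap_comp_singletonMap (G := G), AlgHom.comp_apply]
    exact hr_mem)
  rw [map_zero, SModEq.zero] at hr
  exact ⟨N + 1, N.succ_pos, by rw [pow_succ', mul_assoc]; exact Ideal.mul_mem_left _ _ hr⟩

theorem exists_X_emptyStable_pow_mul_mem_iff {I : Ideal (MvPolynomial (StableSet G) K)}
    (hLI : idealL K G ≤ I) (hI : I ≤ toricIdeal K G) (p : MvPolynomial (StableSet G) K) :
    (∃ n, 0 < n ∧ X (emptyStable G) ^ n * p ∈ I) ↔ p ∈ toricIdeal K G :=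
  ⟨fun ⟨_, _, h⟩ => mem_toricIdeal_of_X_emptyStable_pow_mul_mem (hI h),
    fun hp => (exists_X_emptyStable_pow_mul_mem_idealL hp).imp fun _ ⟨hn, h⟩ => ⟨hn, hLI h⟩⟩

end Saturation

theorem saturations_eq_toricIdeal {d : ℕ} (G : SimpleGraph (Fin d))
    (K : Type) [Field K] :
    (∀ p : MvPolynomial (StableSet G) K,
      (∃ n : ℕ, 0 < n ∧ X (emptyStable G) ^ n * p ∈ idealL K G) ↔ p ∈ toricIdeal K G) ∧
    (∀ p : MvPolynomial (StableSet G) K,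
      (∃ n : ℕ, 0 < n ∧ X (emptyStable G) ^ n * p ∈ idealJ K G) ↔ p ∈ toricIdeal K G) ∧
    (∀ p : MvPolynomial (StableSet G) K,
      (∃ n : ℕ, 0 < n ∧ X (emptyStable G) ^ n * p ∈ quadPart K G) ↔ p ∈ toricIdeal K G) := by
  have hLJ := idealL_le_idealJ (K := K) (G := G)
  have hJQ := idealJ_le_quadPart (K := K) (G := G)
  exact ⟨exists_X_emptyStable_pow_mul_mem_iff le_rfl idealL_le_toricIdeal,
    exists_X_emptyStable_pow_mul_mem_iff hLJ (hJQ.trans quadPart_le_toricIdeal),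
    exists_X_emptyStable_pow_mul_mem_iff (hLJ.trans hJQ) quadPart_le_toricIdeal⟩
end

section
/- Two k-colorings f and g of a graph G are Kempe equivalent if and only if the binomial x_f − x_g belongs to the 2-coloring ideal J_G. -/
open MvPolynomial

/-!
A Kempe switching between colours `i` and `j` only replaces the two disjoint stable sets
`f⁻¹(i)`, `f⁻¹(j)` by two others with the same union, so `x_f - x_g` is a monomial multiple of a
generator of `J_G`. Conversely, a binomial `x^u - x^v` lies in an ideal generated by binomials
`x^a - x^b` only if `v` is reached from `u` by moves `n + a ↦ n + b`: the sum of the coefficients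
over any move-closed set of exponents vanishes on the ideal. The exponents of colourings Kempe
equivalent to `f` form such a set, because two colour classes `S₁, S₂` can be traded for any
disjoint `S₃, S₄` with the same union by switching the components of the two-coloured subgraph
one at a time. Finally, colourings with the same monomial differ by a permutation of the colours,
which is a product of transpositions, i.e. of Kempe switchings.
-/

open Finset

theorem MvPolynomial.imp_of_monomial_sub_mem_span {σ R : Type*} [CommRing R] [Nontrivial R]
    {B : Set (MvPolynomial σ R)} (P : (σ →₀ ℕ) → Prop)
    (hB : ∀ p ∈ B, ∃ a b, p = monomial a 1 - monomial b 1 ∧ ∀ n, (P (n + a) ↔ P (n + b)))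
    {u v : σ →₀ ℕ} (huv : monomial u 1 - monomial v 1 ∈ Ideal.span B) (hu : P u) : P v := by
  classical
  -- `φ p` sums the coefficients of `p` at exponents satisfying `P`
  let φ : MvPolynomial σ R →ₗ[R] R :=
    (basisMonomials σ R).constr R fun m => if P m then 1 else 0
  have φ_monomial (m : σ →₀ ℕ) : φ (monomial m 1) = if P m then 1 else 0 := by
    simpa using (basisMonomials σ R).constr_basis R _ m
  have φ_mul_eq_zero : ∀ p ∈ Ideal.span B, ∀ q, φ (q * p) = 0 := by
    intro p hp
    induction hp using Submodule.span_induction with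
    | mem p hp =>
      obtain ⟨a, b, rfl, hab⟩ := hB p hp
      have : φ ∘ₗ LinearMap.mulRight R (monomial a 1 - monomial b 1) = 0 :=
        (basisMonomials σ R).ext fun n => by simp [mul_sub, monomial_mul, φ_monomial, hab]
      exact LinearMap.congr_fun this
    | zero => simp
    | add p p' _ _ hp hp' => simp [mul_add, hp, hp']
    | smul r p _ hp => intro q; rw [smul_eq_mul, ← mul_assoc]; exact hp _
  by_contra hv
  simpa [φ_monomial, hu, hv] using φ_mul_eq_zero _ huv 1

theorem MvPolynomial.X_mul_X_eq_monomial {σ R : Type*} [CommSemiring R] (i j : σ) :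
    (X i * X j : MvPolynomial σ R) = monomial (Finsupp.single i 1 + Finsupp.single j 1) 1 := by
  rw [X, X, monomial_mul, one_mul]

section SumSingle

variable {ι α : Type*}

theorem Finsupp.sum_single_one_apply [DecidableEq α] (s : Finset ι) (F : ι → α) (a : α) :
    (∑ i ∈ s, Finsupp.single (F i) 1 : α →₀ ℕ) a = #{i ∈ s | F i = a} := by
  simp [Finsupp.finsetSum_apply, Finsupp.single_apply]

theorem Finsupp.exists_mem_eq_of_sum_single_eq_add {s : Finset ι} {F : ι → α}
    {m : α →₀ ℕ} {a : α} (h : ∑ i ∈ s, Finsupp.single (F i) 1 = m + Finsupp.single a 1) :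
    ∃ i ∈ s, F i = a := by
  classical
  by_contra! hF
  simpa [sum_single_one_apply, filter_eq_empty_iff.2 hF] using congr($h a)

theorem Finsupp.exists_ne_eq_of_sum_single_eq_add [Fintype ι] {F : ι → α} {n : α →₀ ℕ}
    {a b : α}
    (h : ∑ i, Finsupp.single (F i) 1 = n + (Finsupp.single a 1 + Finsupp.single b 1)) :
    ∃ i j, i ≠ j ∧ F i = a ∧ F j = b := by
  classical
  obtain ⟨i, -, rfl⟩ := exists_mem_eq_of_sum_single_eq_add (m := n + single b 1)
    (h.trans (by abel))
  have hrest : ∑ j ∈ univ.erase i, single (F j) 1 = n + single b 1 :=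
    add_right_cancel ((sum_erase_add _ _ (mem_univ i)).trans (h.trans (by abel)))
  obtain ⟨j, hj, rfl⟩ := exists_mem_eq_of_sum_single_eq_add hrest
  exact ⟨i, j, (ne_of_mem_erase hj).symm, rfl, rfl⟩

theorem Finsupp.exists_perm_of_sum_single_eq [Fintype ι] {F F' : ι → α}
    (h : ∑ i, Finsupp.single (F i) 1 = ∑ i, Finsupp.single (F' i) (1 : ℕ)) :
    ∃ σ : Equiv.Perm ι, ∀ i, F' (σ i) = F i := by
  classical
  have hcard (a : α) : Fintype.card {i // F i = a} = Fintype.card {i // F' i = a} := by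
    simpa [Fintype.card_subtype, sum_single_one_apply] using congr($h a)
  exact ⟨Equiv.ofFiberEquiv fun a => Fintype.equivOfCardEq (hcard a), Equiv.ofFiberEquiv_map _⟩

end SumSingle

section Recoloring

variable {V : Type} {k : ℕ} {G : SimpleGraph V} {c₁ c₂ : Fin k} {h h' : V → Fin k}

def IsRecoloringWithin (c₁ c₂ : Fin k) (h h' : V → Fin k) : Prop :=
  ∀ v, h' v ≠ h v → (h v = c₁ ∨ h v = c₂) ∧ (h' v = c₁ ∨ h' v = c₂)

theorem KempeSwitch.exists_isRecoloringWithin (hs : KempeSwitch G h h') :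
    ∃ i j, IsRecoloringWithin i j h h' := by
  obtain ⟨i, j, C, ⟨comp, rfl⟩, hswap, hout⟩ := hs
  refine ⟨i, j, fun v hv => ?_⟩
  by_cases hC : v ∈ Subtype.val '' comp.supp
  · have hvij : h v = i ∨ h v = j := by
      obtain ⟨u, -, rfl⟩ := hC
      exact u.2
    have := hswap v hC
    grind
  · exact absurd (hout v hC) hv

theorem isRecoloringWithin_swap_comp (c₁ c₂ : Fin k) (h : V → Fin k) :
    IsRecoloringWithin c₁ c₂ h (Equiv.swap c₁ c₂ ∘ h) := by
  intro v hv
  by_cases h₁ : h v = c₁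
  · simp [h₁]
  by_cases h₂ : h v = c₂
  · simp [h₂]
  exact absurd (Equiv.swap_apply_of_ne_of_ne h₁ h₂) hv

theorem IsColoring.perm_comp (hh : IsColoring G k h) (σ : Equiv.Perm (Fin k)) :
    IsColoring G k (σ ∘ h) :=
  fun _ _ huv he => hh huv (σ.injective he)

theorem IsColoring.piecewise {U : Set V} [∀ v, Decidable (v ∈ U)] (hh : IsColoring G k h)
    (hh' : IsColoring G k h') (hU : ∀ u w, G.Adj u w → u ∈ U → w ∉ U → h' u ≠ h w) :
    IsColoring G k (U.piecewise h' h) := by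
  intro u w huw
  by_cases hu : u ∈ U <;> by_cases hw : w ∈ U <;>
    simp only [Set.piecewise, hu, hw, ite_true, ite_false]
  · exact hh' huw
  · exact hU u w huw hu hw
  · exact (hU w u huw.symm hw hu).symm
  · exact hh huw

section

variable (hh : IsColoring G k h) (hh' : IsColoring G k h') (hr : IsRecoloringWithin c₁ c₂ h h')
include hh hh' hr

theorem IsRecoloringWithin.ne_of_reachable {u w : {v | h v = c₁ ∨ h v = c₂}}
    (huw : (G.induce {v | h v = c₁ ∨ h v = c₂}).Reachable u w) (hu : h' u ≠ h u) :
    h' w ≠ h w := by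
  rw [SimpleGraph.reachable_iff_reflTransGen] at huw
  induction huw with
  | refl => exact hu
  | @tail x y _ hxy ih =>
    -- `h x`, `h y` are the two colours, so `h' x ≠ h x` forces `h' x = h y ≠ h' y`
    have hx : h x = c₁ ∨ h x = c₂ := x.2
    have hy : h y = c₁ ∨ h y = c₂ := y.2
    have hx' : h' x = c₁ ∨ h' x = c₂ := (hr x ih).2
    have hhxy : h x ≠ h y := hh hxy
    have hh'xy : h' x ≠ h' y := hh' hxy
    grind

theorem IsRecoloringWithin.exists_kempeStep {v : V} (hv : h' v ≠ h v) :
    ∃ h₁, KempeStep G h h₁ ∧ IsRecoloringWithin c₁ c₂ h₁ h' ∧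
      {u | h₁ u ≠ h' u} ⊂ {u | h u ≠ h' u} := by
  classical
  set W : Set V := {u | h u = c₁ ∨ h u = c₂}
  set C := (G.induce W).connectedComponentMk ⟨v, (hr v hv).1⟩
  set U := Subtype.val '' C.supp
  have hvU : v ∈ U := ⟨_, (C.mem_supp_iff _).2 rfl, rfl⟩
  have hU : ∀ u ∈ U, h' u ≠ h u := by
    rintro _ ⟨u, hu, rfl⟩
    exact hr.ne_of_reachable hh hh' (SimpleGraph.ConnectedComponent.exact hu.symm) hv
  have hUW : ∀ u ∈ U, ∀ w ∈ W, G.Adj u w → w ∈ U := by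
    rintro _ ⟨u, hu, rfl⟩ w hw huw
    refine ⟨⟨w, hw⟩, ?_, rfl⟩
    rw [SimpleGraph.ConnectedComponent.mem_supp_iff] at hu ⊢
    have hwu : (G.induce W).Adj ⟨w, hw⟩ u := huw.symm
    exact (SimpleGraph.ConnectedComponent.sound hwu.reachable).trans hu
  have hboundary : ∀ u w, G.Adj u w → u ∈ U → w ∉ U → h' u ≠ h w := by
    intro u w huw hu hw
    have hw' : ¬(h w = c₁ ∨ h w = c₂) := fun hwW => hw (hUW u hu w hwW huw)
    have := (hr u (hU u hu)).2
    grind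
  refine ⟨U.piecewise h' h, ⟨hh, hh.piecewise hh' hboundary, c₁, c₂, U, ⟨C, rfl⟩,
    fun u hu => ?_, fun u hu => U.piecewise_eq_of_notMem _ _ hu⟩, fun u hu => ?_, ?_⟩
  · have := (hr u (hU u hu)).2
    have := hU u hu
    rw [U.piecewise_eq_of_mem _ _ hu]
    grind
  · have hu' : u ∉ U := fun hu' => hu (U.piecewise_eq_of_mem _ _ hu').symm
    rw [U.piecewise_eq_of_notMem _ _ hu'] at hu ⊢
    exact hr u hu
  · refine Set.ssubset_iff_of_subset (fun u hu => ?_) |>.2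
      ⟨v, hv.symm, not_not.2 (U.piecewise_eq_of_mem _ _ hvU)⟩
    have hu' : u ∉ U := fun hu' => hu (U.piecewise_eq_of_mem _ _ hu')
    exact fun he => hu ((U.piecewise_eq_of_notMem _ _ hu').trans he)

theorem IsRecoloringWithin.kempeEquiv [Finite V] : KempeEquiv G h h' := by
  induction hn : {v | h v ≠ h' v}.ncard using Nat.strong_induction_on generalizing h with
  | _ n ih =>
  by_cases heq : h = h'
  · exact heq ▸ .refl
  obtain ⟨v, hv⟩ := Function.ne_iff.1 heq
  obtain ⟨h₁, hstep, hr₁, hlt⟩ := hr.exists_kempeStep hh hh' (Ne.symm hv)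
  exact .head hstep (ih _ (hn ▸ Set.ncard_lt_ncard hlt) hstep.2.1 hr₁ rfl)

end

theorem kempeEquiv_perm_comp [Finite V] (hh : IsColoring G k h) (σ : Equiv.Perm (Fin k)) :
    KempeEquiv G h (σ ∘ h) := by
  induction σ using Equiv.Perm.swap_induction_on with
  | one => exact .refl
  | swap_mul τ c₁ c₂ _ ih =>
    exact ih.trans ((isRecoloringWithin_swap_comp c₁ c₂ (τ ∘ h)).kempeEquiv
      (hh.perm_comp τ) (hh.perm_comp _))

end Recoloring

section ColorClasses

variable {V : Type} [Fintype V] [DecidableEq V] {k : ℕ} {G : SimpleGraph V}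
  {f g : V → Fin k}

@[simp]
theorem mem_colorClass (hf : IsColoring G k f) {v : V} {c : Fin k} :
    v ∈ (colorClass G f hf c).1 ↔ f v = c := by
  simp [colorClass]

theorem disjoint_colorClass (hf : IsColoring G k f) {c₁ c₂ : Fin k} (hc : c₁ ≠ c₂) :
    Disjoint (colorClass G f hf c₁).1 (colorClass G f hf c₂).1 :=
  Finset.disjoint_left.2 fun _ h₁ h₂ => hc ((mem_colorClass hf).1 h₁ ▸ (mem_colorClass hf).1 h₂)

noncomputable def colorExponent (hf : IsColoring G k f) : StableSet G →₀ ℕ :=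
  ∑ c, Finsupp.single (colorClass G f hf c) 1

theorem xMonomial_eq_monomial (hf : IsColoring G k f) (K : Type) [Field K] :
    xMonomial K G f hf = monomial (colorExponent hf) 1 := by
  rw [colorExponent, monomial_sum_one]
  rfl

theorem kempeEquiv_of_colorExponent_eq (hf : IsColoring G k f) (hg : IsColoring G k g)
    (he : colorExponent hf = colorExponent hg) :
    KempeEquiv G f g := by
  obtain ⟨σ, hσ⟩ := Finsupp.exists_perm_of_sum_single_eq he
  have hgf : g = σ ∘ f := funext fun v => by
    have : v ∈ (colorClass G g hg (σ (f v))).1 := by rw [hσ]; simp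
    simpa using this
  exact hgf ▸ kempeEquiv_perm_comp hf σ

variable {c₁ c₂ : Fin k}

theorem IsRecoloringWithin.colorClass_eq {hf : IsColoring G k f} {hg : IsColoring G k g}
    (hr : IsRecoloringWithin c₁ c₂ f g) {c : Fin k} (h₁ : c ≠ c₁) (h₂ : c ≠ c₂) :
    colorClass G f hf c = colorClass G g hg c :=
  Subtype.ext <| Finset.ext fun v => by
    by_cases hv : g v = f v
    · simp [hv]
    · simp only [mem_colorClass]
      grind [hr v hv]

theorem IsRecoloringWithin.colorClass_union {hf : IsColoring G k f} {hg : IsColoring G k g}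
    (hr : IsRecoloringWithin c₁ c₂ f g) :
    (colorClass G f hf c₁).1 ∪ (colorClass G f hf c₂).1 =
      (colorClass G g hg c₁).1 ∪ (colorClass G g hg c₂).1 :=
  Finset.ext fun v => by
    by_cases hv : g v = f v
    · simp [hv]
    · have := hr v hv
      simp only [mem_union, mem_colorClass]
      tauto

theorem IsRecoloringWithin.exists_colorExponent_eq_add (hf : IsColoring G k f)
    (hg : IsColoring G k g) (hr : IsRecoloringWithin c₁ c₂ f g) (hc : c₁ ≠ c₂) :
    ∃ R, colorExponent hf = R +
      (Finsupp.single (colorClass G f hf c₁) 1 + Finsupp.single (colorClass G f hf c₂) 1) ∧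
      colorExponent hg = R +
      (Finsupp.single (colorClass G g hg c₁) 1 + Finsupp.single (colorClass G g hg c₂) 1) := by
  have split (F : Fin k → StableSet G) : ∑ c, Finsupp.single (F c) 1 =
      ∑ c ∈ {c₁, c₂}ᶜ, Finsupp.single (F c) 1 +
        (Finsupp.single (F c₁) 1 + Finsupp.single (F c₂) 1) := by
    rw [← sum_pair (f := fun c => Finsupp.single (F c) 1) hc, add_comm, sum_add_sum_compl]
  refine ⟨_, split _, (split _).trans ?_⟩
  congr 1
  refine sum_congr rfl fun c hc => ?_
  simp only [mem_compl, mem_insert, mem_singleton, not_or] at hc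
  rw [hr.colorClass_eq hc.1 hc.2]

end ColorClasses

section TwoColoringIdeal

variable {V : Type} [Fintype V] [DecidableEq V] {k : ℕ} {G : SimpleGraph V} (K : Type) [Field K]
  {f g : V → Fin k} {c₁ c₂ : Fin k}

theorem IsRecoloringWithin.xMonomial_sub_mem_idealJ (hf : IsColoring G k f)
    (hg : IsColoring G k g) (hr : IsRecoloringWithin c₁ c₂ f g) :
    xMonomial K G f hf - xMonomial K G g hg ∈ idealJ K G := by
  rcases eq_or_ne c₁ c₂ with rfl | hc
  · obtain rfl : f = g := funext fun v => by_contra fun hv => by grind [hr v (Ne.symm hv)]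
    simp
  obtain ⟨R, hfR, hgR⟩ := hr.exists_colorExponent_eq_add hf hg hc
  have hgen : X (colorClass G f hf c₁) * X (colorClass G f hf c₂) -
      X (colorClass G g hg c₁) * X (colorClass G g hg c₂) ∈ idealJ K G :=
    Ideal.subset_span ⟨_, _, _, _, disjoint_colorClass hf hc, disjoint_colorClass hg hc,
      hr.colorClass_union, rfl⟩
  have hfactor : xMonomial K G f hf - xMonomial K G g hg = monomial R 1 *
      (X (colorClass G f hf c₁) * X (colorClass G f hf c₂) -
        X (colorClass G g hg c₁) * X (colorClass G g hg c₂)) := by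
    rw [xMonomial_eq_monomial, xMonomial_eq_monomial, hfR, hgR, X_mul_X_eq_monomial,
      X_mul_X_eq_monomial, mul_sub, monomial_mul, monomial_mul, one_mul]
  exact hfactor ▸ Ideal.mul_mem_left _ _ hgen

theorem KempeEquiv.xMonomial_sub_mem_idealJ (hfg : KempeEquiv G f g) (hf : IsColoring G k f)
    (hg : IsColoring G k g) : xMonomial K G f hf - xMonomial K G g hg ∈ idealJ K G := by
  induction hfg with
  | refl => simp
  | @tail h g _ hstep ih =>
    obtain ⟨i, j, hr⟩ := hstep.2.2.exists_isRecoloringWithin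
    simpa using add_mem (ih hstep.1) (hr.xMonomial_sub_mem_idealJ K hstep.1 hg)

end TwoColoringIdeal

section Exchange

variable {V : Type} [Fintype V] [DecidableEq V] {k : ℕ} {G : SimpleGraph V}
  {h : V → Fin k} {c₁ c₂ : Fin k}

theorem exists_isRecoloringWithin_colorClass_eq (hh : IsColoring G k h) (hc : c₁ ≠ c₂)
    {S₃ S₄ : StableSet G} (h34 : Disjoint S₃.1 S₄.1)
    (hu : (colorClass G h hh c₁).1 ∪ (colorClass G h hh c₂).1 = S₃.1 ∪ S₄.1) :
    ∃ (h' : V → Fin k) (hh' : IsColoring G k h'), IsRecoloringWithin c₁ c₂ h h' ∧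
      colorClass G h' hh' c₁ = S₃ ∧ colorClass G h' hh' c₂ = S₄ := by
  let h' v := if v ∈ S₃.1 then c₁ else if v ∈ S₄.1 then c₂ else h v
  have hW (v : V) : (h v = c₁ ∨ h v = c₂) ↔ (v ∈ S₃.1 ∨ v ∈ S₄.1) := by
    simpa using congr(v ∈ $hu)
  have h'₁ (v : V) : h' v = c₁ ↔ v ∈ S₃.1 := by
    have : v ∈ S₃.1 → v ∉ S₄.1 := fun hv => disjoint_left.1 h34 hv
    grind
  have h'₂ (v : V) : h' v = c₂ ↔ v ∈ S₄.1 := by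
    have : v ∈ S₃.1 → v ∉ S₄.1 := fun hv => disjoint_left.1 h34 hv
    grind
  have hr : IsRecoloringWithin c₁ c₂ h h' := fun v hv => by grind
  have hh' : IsColoring G k h' := by
    intro u v huv he
    by_cases hu₁ : h' u = c₁
    · exact S₃.2 ((h'₁ u).1 hu₁) ((h'₁ v).1 (he ▸ hu₁)) huv
    by_cases hu₂ : h' u = c₂
    · exact S₄.2 ((h'₂ u).1 hu₂) ((h'₂ v).1 (he ▸ hu₂)) huv
    · refine hh huv ?_
      grind
  exact ⟨h', hh', hr, Subtype.ext <| Finset.ext fun v => by simp [h'₁],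
    Subtype.ext <| Finset.ext fun v => by simp [h'₂]⟩

theorem exists_kempeEquiv_colorExponent_eq_add (hh : IsColoring G k h)
    {S₁ S₂ S₃ S₄ : StableSet G} (h34 : Disjoint S₃.1 S₄.1) (hu : S₁.1 ∪ S₂.1 = S₃.1 ∪ S₄.1)
    {n : StableSet G →₀ ℕ}
    (he : colorExponent hh = n + (Finsupp.single S₁ 1 + Finsupp.single S₂ 1)) :
    ∃ (h' : V → Fin k) (hh' : IsColoring G k h'), KempeEquiv G h h' ∧
      colorExponent hh' = n + (Finsupp.single S₃ 1 + Finsupp.single S₄ 1) := by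
  obtain ⟨c₁, c₂, hc, rfl, rfl⟩ := Finsupp.exists_ne_eq_of_sum_single_eq_add he
  obtain ⟨h', hh', hr, rfl, rfl⟩ := exists_isRecoloringWithin_colorClass_eq hh hc h34 hu
  obtain ⟨R, hR, hR'⟩ := hr.exists_colorExponent_eq_add hh hh' hc
  obtain rfl : R = n := add_right_cancel (hR.symm.trans he)
  exact ⟨h', hh', hr.kempeEquiv hh hh', hR'⟩

variable (G) in
def kempeExponents (f : V → Fin k) : Set (StableSet G →₀ ℕ) :=
  {m | ∃ (h : V → Fin k) (hh : IsColoring G k h), KempeEquiv G f h ∧ colorExponent hh = m}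

theorem add_mem_kempeExponents_iff {f : V → Fin k} {S₁ S₂ S₃ S₄ : StableSet G}
    (h12 : Disjoint S₁.1 S₂.1) (h34 : Disjoint S₃.1 S₄.1) (hu : S₁.1 ∪ S₂.1 = S₃.1 ∪ S₄.1)
    (n : StableSet G →₀ ℕ) :
    n + (Finsupp.single S₁ 1 + Finsupp.single S₂ 1) ∈ kempeExponents G f ↔
      n + (Finsupp.single S₃ 1 + Finsupp.single S₄ 1) ∈ kempeExponents G f := by
  constructor
  · rintro ⟨h, hh, hfh, he⟩
    obtain ⟨h', hh', hhh', he'⟩ := exists_kempeEquiv_colorExponent_eq_add hh h34 hu he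
    exact ⟨h', hh', hfh.trans hhh', he'⟩
  · rintro ⟨h, hh, hfh, he⟩
    obtain ⟨h', hh', hhh', he'⟩ := exists_kempeEquiv_colorExponent_eq_add hh h12 hu.symm he
    exact ⟨h', hh', hfh.trans hhh', he'⟩

end Exchange

theorem kempe_equiv_iff_mem_idealJ {d k : ℕ} (G : SimpleGraph (Fin d))
    (K : Type) [Field K] (f g : Fin d → Fin k)
    (hf : IsColoring G k f) (hg : IsColoring G k g) :
    KempeEquiv G f g ↔ xMonomial K G f hf - xMonomial K G g hg ∈ idealJ K G := by
  refine ⟨fun hfg => hfg.xMonomial_sub_mem_idealJ K hf hg, fun hmem => ?_⟩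
  rw [xMonomial_eq_monomial, xMonomial_eq_monomial, idealJ] at hmem
  have hmoves : ∀ p ∈ {p : MvPolynomial (StableSet G) K | ∃ S₁ S₂ S₃ S₄ : StableSet G,
      Disjoint S₁.1 S₂.1 ∧ Disjoint S₃.1 S₄.1 ∧ S₁.1 ∪ S₂.1 = S₃.1 ∪ S₄.1 ∧
        p = X S₁ * X S₂ - X S₃ * X S₄}, ∃ a b, p = monomial a 1 - monomial b 1 ∧
      ∀ n, (n + a ∈ kempeExponents G f ↔ n + b ∈ kempeExponents G f) := by
    rintro _ ⟨S₁, S₂, S₃, S₄, h12, h34, hu, rfl⟩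
    exact ⟨_, _, by rw [X_mul_X_eq_monomial, X_mul_X_eq_monomial],
      add_mem_kempeExponents_iff h12 h34 hu⟩
  obtain ⟨h, hh, hfh, he⟩ :=
    imp_of_monomial_sub_mem_span _ hmoves hmem ⟨f, hf, .refl, rfl⟩
  exact hfh.trans (kempeEquiv_of_colorExponent_eq hh hg he)
end

section
/- For every graph G on d vertices, the Hilbert function H(R[G]/K_G, k) equals 2^d for all k ≥ Δ(G) + 1, where Δ(G) is the maximum degree of G; hence the Hilbert polynomial of R[G]/K_G is the constant 2^d. -/
open MvPolynomial

/-!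
For a proper colouring `f` of an induced subgraph `G[W]` with colours `Fin k`, the product `x_f`
of the variables of its `k` colour classes (empty classes included) is a monomial of degree `k`,
and every monomial of degree `k` in `R[G]` is either such an `x_f` or a multiple of a generator
of `M_G`. If `k > Δ(G)`, any two proper `k`-colourings of `G[W]` are joined by steps that recolour
only within a pair of colours (induct on `W`, lifting each step from `W` to `insert v W`), and each
step changes `x_f` by a multiple of a generator of `J_G`. So `(R[G]/K_G)_k` is spanned by one
class `x_W` for each `W ⊆ V`. These `2^d` classes are independent: under `x_S ↦ ∏_{i ∈ S} t_i`
the ideal `J_G` vanishes and `M_G` lands in `(t_i²)`, while `x_W ↦ ∏_{i ∈ W} t_i`, so the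
squarefree coefficients separate them.
-/

open Finset Function

section Recoloring

variable {V : Type*} (G : SimpleGraph V) {k : ℕ}

def IsProperOn (W : Finset V) (f : V → Fin k) : Prop :=
  ∀ ⦃u⦄, u ∈ W → ∀ ⦃w⦄, w ∈ W → G.Adj u w → f u ≠ f w

def IsTwoColorMove (W : Finset V) (a b : Fin k) (f g : V → Fin k) : Prop :=
  ∀ u ∈ W, g u = f u ∨ (f u ∈ ({a, b} : Finset (Fin k)) ∧ g u ∈ ({a, b} : Finset (Fin k)))

def TwoColorStep (W : Finset V) (f g : V → Fin k) : Prop :=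
  IsProperOn G W f ∧ IsProperOn G W g ∧ ∃ a b, IsTwoColorMove W a b f g

def TwoColorEquiv (W : Finset V) : (V → Fin k) → (V → Fin k) → Prop :=
  Relation.ReflTransGen (TwoColorStep G W)

variable {G}

lemma IsProperOn.mono {W W' : Finset V} {f : V → Fin k} (hf : IsProperOn G W f) (h : W' ⊆ W) :
    IsProperOn G W' f :=
  fun _ hu _ hw => hf (h hu) (h hw)

lemma TwoColorEquiv.isProperOn {W : Finset V} {f g : V → Fin k} (h : TwoColorEquiv G W f g)
    (hf : IsProperOn G W f) : IsProperOn G W g := by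
  rcases h.cases_tail with rfl | ⟨_, -, hstep⟩
  exacts [hf, hstep.2.1]

variable [DecidableEq V]

lemma IsProperOn.update {W : Finset V} {f : V → Fin k} {v : V} {c : Fin k}
    (hf : IsProperOn G W f) (hc : ∀ u ∈ W, G.Adj v u → f u ≠ c) :
    IsProperOn G (insert v W) (update f v c) := by
  intro u hu w hw hadj
  rcases eq_or_ne u v with rfl | huv
  · rw [update_self, update_of_ne hadj.ne.symm]
    exact (hc w (mem_of_mem_insert_of_ne hw hadj.ne.symm) hadj).symm
  rcases eq_or_ne w v with rfl | hwv
  · rw [update_self, update_of_ne huv]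
    exact hc u (mem_of_mem_insert_of_ne hu huv) hadj.symm
  rw [update_of_ne huv, update_of_ne hwv]
  exact hf (mem_of_mem_insert_of_ne hu huv) (mem_of_mem_insert_of_ne hw hwv) hadj

lemma isTwoColorMove_insert_of_eqOn {W : Finset V} {v : V} {f g : V → Fin k}
    (h : ∀ u ∈ W, g u = f u) : IsTwoColorMove (insert v W) (f v) (g v) f g := by
  intro u hu
  rcases eq_or_ne u v with rfl | huv
  · simp
  · exact .inl (h u (mem_of_mem_insert_of_ne hu huv))

lemma IsTwoColorMove.update_insert {W : Finset V} {v : V} {a b c : Fin k} {H y z : V → Fin k}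
    (hyz : IsTwoColorMove W a b y z) (hv : v ∉ W) (hHy : ∀ u ∈ W, H u = y u)
    (hc : c = H v ∨ (H v ∈ ({a, b} : Finset (Fin k)) ∧ c ∈ ({a, b} : Finset (Fin k)))) :
    IsTwoColorMove (insert v W) a b H (update z v c) := by
  intro u hu
  rcases eq_or_ne u v with rfl | huv
  · rwa [update_self]
  · have huW := mem_of_mem_insert_of_ne hu huv
    rw [update_of_ne huv, hHy u huW]
    exact hyz u huW

/-- Parking `v` at a colour `c` outside the pair first lets the move be carried out on
`insert v W`. -/
lemma IsTwoColorMove.twoColorEquiv_update_insert {W : Finset V} {v : V} {a b c : Fin k}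
    {H y z : V → Fin k} (hyz : IsTwoColorMove W a b y z) (hz : IsProperOn G W z) (hv : v ∉ W)
    (hH : IsProperOn G (insert v W) H) (hHy : ∀ u ∈ W, H u = y u)
    (hcab : c ∉ ({a, b} : Finset (Fin k))) (hc : ∀ u ∈ W, G.Adj v u → H u ≠ c) :
    TwoColorEquiv G (insert v W) H (update z v c) := by
  have hzc : ∀ u ∈ W, G.Adj v u → z u ≠ c := by
    rintro u hu hadj rfl
    rcases hyz u hu with h | ⟨-, h⟩
    · exact hc u hu hadj (by rw [hHy u hu, h])
    · exact hcab h
  have hHc : ∀ u ∈ W, update H v c u = H u := fun u hu =>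
    update_of_ne (ne_of_mem_of_not_mem hu hv) _ _
  have hH₁ : IsProperOn G (insert v W) (update H v c) := (hH.mono (subset_insert v W)).update hc
  refine .head ⟨hH, hH₁, _, _, isTwoColorMove_insert_of_eqOn hHc⟩ (.single ⟨hH₁, hz.update hzc,
    a, b, hyz.update_insert hv (fun u hu => (hHc u hu).trans (hHy u hu)) ?_⟩)
  exact .inl (update_self v c H).symm

variable [Fintype V] [DecidableRel G.Adj]

lemma exists_color_notMem_of_neighbors (hk : G.maxDegree < k) (f : V → Fin k) {W s : Finset V}
    {v : V} {A : Finset (Fin k)} (hsW : s ⊆ W) (hsv : ∀ u ∈ s, G.Adj v u)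
    (hA : #A ≤ #s) (hsA : ∀ u ∈ s, f u ∈ A) :
    ∃ c ∉ A, ∀ u ∈ W, G.Adj v u → f u ≠ c := by
  set N := W ∩ G.neighborFinset v
  have hsN : s ⊆ N := fun u hu => mem_inter.2 ⟨hsW hu, (G.mem_neighborFinset v u).2 (hsv u hu)⟩
  have hN : #N ≤ G.maxDegree :=
    (card_le_card inter_subset_right).trans (G.degree_le_maxDegree v)
  have hcard : #(A ∪ (N \ s).image f) < #(univ : Finset (Fin k)) := by
    calc #(A ∪ (N \ s).image f) ≤ #A + #(N \ s) :=
          (card_union_le _ _).trans (by gcongr; exact card_image_le)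
      _ = #A + (#N - #s) := by rw [card_sdiff_of_subset hsN]
      _ < #(univ : Finset (Fin k)) := by
        have := card_le_card hsN
        rw [card_univ, Fintype.card_fin]
        omega
  obtain ⟨c, -, hc⟩ := exists_mem_notMem_of_card_lt_card hcard
  refine ⟨c, fun h => hc (mem_union_left _ h), fun u hu hadj hfu => hc ?_⟩
  by_cases hus : u ∈ s
  · exact mem_union_left _ (hfu ▸ hsA u hus)
  · exact mem_union_right _ (mem_image.2 ⟨u, mem_sdiff.2
      ⟨mem_inter.2 ⟨hu, (G.mem_neighborFinset v u).2 hadj⟩, hus⟩, hfu⟩)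

lemma exists_isProperOn (hk : G.maxDegree < k) (W : Finset V) :
    ∃ f : V → Fin k, IsProperOn G W f := by
  induction W using Finset.induction_on with
  | empty => exact ⟨fun _ => ⟨0, Nat.zero_lt_of_lt hk⟩, fun u hu => absurd hu (notMem_empty u)⟩
  | insert v W _ ih =>
    obtain ⟨f, hf⟩ := ih
    obtain ⟨c, -, hc⟩ := exists_color_notMem_of_neighbors (A := ∅) hk f (empty_subset W)
      (by simp) le_rfl (by simp)
    exact ⟨update f v c, hf.update hc⟩

/-- If no colour outside the pair is free at `v`, then `v` has a colour of the pair, and counting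
neighbours shows that a colour of the pair is free at `v` after the move. -/
lemma TwoColorStep.exists_lift (hk : G.maxDegree < k) {W : Finset V} {v : V} (hv : v ∉ W)
    {H y z : V → Fin k} (hH : IsProperOn G (insert v W) H) (hHy : ∀ u ∈ W, H u = y u)
    (hyz : TwoColorStep G W y z) :
    ∃ H', TwoColorEquiv G (insert v W) H H' ∧ ∀ u ∈ W, H' u = z u := by
  obtain ⟨-, hz, a, b, hmove⟩ := hyz
  have hzc : ∀ c, ∀ u ∈ W, update z v c u = z u := fun c u hu =>
    update_of_ne (ne_of_mem_of_not_mem hu hv) _ _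
  by_cases hfree : ∃ c ∉ ({a, b} : Finset (Fin k)), ∀ u ∈ W, G.Adj v u → H u ≠ c
  · obtain ⟨c, hcab, hc⟩ := hfree
    exact ⟨_, hmove.twoColorEquiv_update_insert hz hv hH hHy hcab hc, hzc c⟩
  push Not at hfree
  have hHv : H v ∈ ({a, b} : Finset (Fin k)) := by
    by_contra h
    obtain ⟨u, hu, hadj, hHu⟩ := hfree (H v) h
    exact hH (mem_insert_of_mem hu) (mem_insert_self v W) hadj.symm hHu
  set s := W.filter fun u => G.Adj v u ∧ z u ∈ ({a, b} : Finset (Fin k))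
  have hs : #s < #({a, b} : Finset (Fin k)) := by
    by_contra! hle
    have hsab : ∀ u ∈ s, H u ∈ ({a, b} : Finset (Fin k)) := by
      intro u hu
      obtain ⟨huW, -, hzu⟩ := mem_filter.1 hu
      rcases hmove u huW with h | ⟨h, -⟩ <;> rw [hHy u huW]
      exacts [h ▸ hzu, h]
    obtain ⟨c, hc, hcfree⟩ := exists_color_notMem_of_neighbors hk H (filter_subset _ W)
      (fun u hu => (mem_filter.1 hu).2.1) hle hsab
    obtain ⟨u, hu, hadj, hHu⟩ := hfree c hc
    exact hcfree u hu hadj hHu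
  obtain ⟨c, hcab, hcs⟩ := exists_mem_notMem_of_card_lt_card (card_image_le.trans_lt hs)
  have hc : ∀ u ∈ W, G.Adj v u → z u ≠ c := fun u hu hadj hzu =>
    hcs (mem_image.2 ⟨u, mem_filter.2 ⟨hu, hadj, hzu ▸ hcab⟩, hzu⟩)
  exact ⟨update z v c, .single ⟨hH, hz.update hc, a, b,
    hmove.update_insert hv hHy (.inr ⟨hHv, hcab⟩)⟩, hzc c⟩

theorem twoColorEquiv_of_maxDegree_lt (hk : G.maxDegree < k) (W : Finset V) {f g : V → Fin k}
    (hf : IsProperOn G W f) (hg : IsProperOn G W g) : TwoColorEquiv G W f g := by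
  induction W using Finset.induction_on generalizing f g with
  | empty =>
    have c : Fin k := ⟨0, Nat.zero_lt_of_lt hk⟩
    exact .single ⟨hf, hg, c, c, fun u hu => absurd hu (notMem_empty u)⟩
  | insert v W hv ih =>
    have hlift : ∀ h, TwoColorEquiv G W f h →
        ∃ H, TwoColorEquiv G (insert v W) f H ∧ ∀ u ∈ W, H u = h u := by
      intro h hfh
      induction hfh with
      | refl => exact ⟨f, .refl, fun _ _ => rfl⟩
      | tail _ hstep ih =>
        obtain ⟨H, hfH, hH⟩ := ih
        obtain ⟨H', hHH', hH'⟩ := hstep.exists_lift hk hv (hfH.isProperOn hf) hH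
        exact ⟨H', hfH.trans hHH', hH'⟩
    obtain ⟨H, hfH, hHg⟩ :=
      hlift g (ih (hf.mono (subset_insert v W)) (hg.mono (subset_insert v W)))
    exact hfH.tail ⟨hfH.isProperOn hf, hg, _, _,
      isTwoColorMove_insert_of_eqOn fun u hu => (hHg u hu).symm⟩

end Recoloring

lemma MvPolynomial.homogeneousSubmodule_eq_span_prod_X (σ R : Type*) [CommSemiring R] (n : ℕ) :
    homogeneousSubmodule σ R n =
      Submodule.span R (Set.range fun s : Fin n → σ => ∏ i, (X (s i) : MvPolynomial σ R)) := by
  rw [← homogeneousSubmodule_one_pow, homogeneousSubmodule_one_eq_span_X, Submodule.span_pow]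
  congr 1
  ext p
  simp only [Set.mem_pow_iff_prod, Set.mem_range]
  constructor
  · rintro ⟨f, hf, rfl⟩
    choose s hs using hf
    exact ⟨s, by simp only [hs]⟩
  · rintro ⟨s, rfl⟩
    exact ⟨_, fun i => ⟨s i, rfl⟩, rfl⟩

lemma MvPolynomial.coeff_prod_X_sum_single {σ R : Type*} [CommSemiring R] [DecidableEq σ]
    (s t : Finset σ) :
    coeff (∑ i ∈ t, Finsupp.single i 1) (∏ i ∈ s, (X i : MvPolynomial σ R)) =
      if s = t then 1 else 0 := by
  rw [show ∏ i ∈ s, (X i : MvPolynomial σ R) = monomial (∑ i ∈ s, Finsupp.single i 1) 1 from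
    (monomial_sum_one s _).symm, coeff_monomial]
  congr 1
  refine propext ⟨fun h => ?_, fun h => h ▸ rfl⟩
  simpa using congrArg Finsupp.toMultiset h

lemma MvPolynomial.coeff_eq_zero_of_mem_span_X_sq {σ R : Type*} [CommSemiring R] [Fintype σ]
    {m : σ →₀ ℕ} (hm : ∀ i, m i ≤ 1) {p : MvPolynomial σ R}
    (hp : p ∈ Ideal.span (Set.range fun i => (X i : MvPolynomial σ R) ^ 2)) : coeff m p = 0 := by
  obtain ⟨c, rfl⟩ := Ideal.mem_span_range_iff_exists_fun.1 hp
  rw [coeff_sum]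
  refine sum_eq_zero fun i _ => ?_
  rw [X_pow_eq_monomial, coeff_mul_monomial', if_neg]
  intro h
  have := (Finsupp.le_def.1 h i).trans (hm i)
  simp at this

section KempeRing

variable {V : Type} (G : SimpleGraph V) (K : Type) [Field K] {k : ℕ}

def colorClassOn (W : Finset V) (f : V → Fin k) (hf : IsProperOn G W f) (c : Fin k) :
    StableSet G :=
  ⟨W.filter (f · = c), fun _ hu _ hw hadj => hf (mem_filter.1 hu).1 (mem_filter.1 hw).1 hadj
    ((mem_filter.1 hu).2.trans (mem_filter.1 hw).2.symm)⟩

/-- The monomial `x_f` of a proper colouring `f` of the induced subgraph `G[W]`. -/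
noncomputable def xMonomialOn (W : Finset V) (f : V → Fin k) (hf : IsProperOn G W f) :
    MvPolynomial (StableSet G) K :=
  ∏ c, X (colorClassOn G W f hf c)

noncomputable def vertexMap : MvPolynomial (StableSet G) K →ₐ[K] MvPolynomial V K :=
  aeval fun S => ∏ i ∈ S.1, X i

lemma vertexMap_X (S : StableSet G) : vertexMap G K (X S) = ∏ i ∈ S.1, X i :=
  aeval_X _ _

lemma vertexMap_xMonomialOn (W : Finset V) (f : V → Fin k) (hf : IsProperOn G W f) :
    vertexMap G K (xMonomialOn G K W f hf) = ∏ i ∈ W, X i := by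
  simp only [xMonomialOn, map_prod, vertexMap_X]
  exact prod_fiberwise W f fun i => (X i : MvPolynomial V K)

lemma disjoint_colorClassOn {W : Finset V} {f : V → Fin k} (hf : IsProperOn G W f) {a b : Fin k}
    (hab : a ≠ b) : Disjoint (colorClassOn G W f hf a).1 (colorClassOn G W f hf b).1 :=
  disjoint_filter.2 fun _ _ ha hb => hab (ha.symm.trans hb)

variable [DecidableEq V]

lemma idealJ_le_kempeIdeal : idealJ K G ≤ kempeIdeal K G := le_sup_left

lemma idealM_le_kempeIdeal : idealM K G ≤ kempeIdeal K G := le_sup_right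

lemma TwoColorStep.xMonomialOn_sub_mem_idealJ {W : Finset V} {f g : V → Fin k}
    (h : TwoColorStep G W f g) :
    xMonomialOn G K W f h.1 - xMonomialOn G K W g h.2.1 ∈ idealJ K G := by
  obtain ⟨hf, hg, a, b, hmove⟩ := h
  have hout : ∀ c ∉ ({a, b} : Finset (Fin k)),
      colorClassOn G W f hf c = colorClassOn G W g hg c := by
    intro c hc
    refine Subtype.ext (filter_congr fun u hu => ?_)
    rcases hmove u hu with h | ⟨h₁, h₂⟩
    · rw [h]
    · exact iff_of_false (fun h => hc (h ▸ h₁)) (fun h => hc (h ▸ h₂))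
  have hpair : (colorClassOn G W f hf a).1 ∪ (colorClassOn G W f hf b).1 =
      (colorClassOn G W g hg a).1 ∪ (colorClassOn G W g hg b).1 := by
    ext u
    simp only [colorClassOn, ← filter_or, mem_filter]
    refine and_congr_right fun hu => ?_
    rcases hmove u hu with h | ⟨h₁, h₂⟩
    · rw [h]
    · simp only [mem_insert, mem_singleton] at h₁ h₂
      exact iff_of_true h₁ h₂
  by_cases hab : a = b
  · subst hab
    have hclass : ∀ c, colorClassOn G W f hf c = colorClassOn G W g hg c := by
      intro c
      obtain rfl | hca := eq_or_ne c a
      · exact Subtype.ext (by simpa using hpair)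
      · exact hout c (by simpa using hca)
    simp only [xMonomialOn, hclass, sub_self, zero_mem]
  have hsplit : ∀ φ : Fin k → MvPolynomial (StableSet G) K,
      ∏ c, φ c = φ a * φ b * ∏ c ∈ ({a, b} : Finset (Fin k))ᶜ, φ c := fun φ => by
    rw [← prod_mul_prod_compl {a, b}, prod_pair hab]
  rw [xMonomialOn, xMonomialOn, hsplit, hsplit,
    prod_congr rfl fun c hc => congrArg X (hout c (mem_compl.1 hc)), ← sub_mul]
  exact Ideal.mul_mem_right _ _ (Ideal.subset_span ⟨_, _, _, _, disjoint_colorClassOn G hf hab,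
    disjoint_colorClassOn G hg hab, hpair, rfl⟩)

lemma TwoColorEquiv.xMonomialOn_sub_mem_idealJ {W : Finset V} {f g : V → Fin k}
    (h : TwoColorEquiv G W f g) (hf : IsProperOn G W f) (hg : IsProperOn G W g) :
    xMonomialOn G K W f hf - xMonomialOn G K W g hg ∈ idealJ K G := by
  induction h with
  | refl => simp
  | tail _ hstep ih =>
    simpa using add_mem (ih hstep.1) (hstep.xMonomialOn_sub_mem_idealJ G K)

lemma prod_X_mem_idealM {S : Fin k → StableSet G} {i j : Fin k} (hij : i ≠ j)
    (h : ((S i).1 ∩ (S j).1).Nonempty) :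
    ∏ l, (X (S l) : MvPolynomial (StableSet G) K) ∈ idealM K G := by
  rw [← mul_prod_erase univ _ (mem_univ i),
    ← mul_prod_erase _ _ (mem_erase.2 ⟨hij.symm, mem_univ j⟩), ← mul_assoc]
  exact Ideal.mul_mem_right _ _ (Ideal.subset_span ⟨_, _, h, rfl⟩)

lemma exists_xMonomialOn_eq_prod_X (hk : 0 < k) {S : Fin k → StableSet G}
    (hS : Pairwise fun i j => Disjoint (S i).1 (S j).1) :
    ∃ (W : Finset V) (f : V → Fin k) (hf : IsProperOn G W f),
      xMonomialOn G K W f hf = ∏ i, X (S i) := by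
  classical
  let f : V → Fin k := fun v => if h : ∃ i, v ∈ (S i).1 then h.choose else ⟨0, hk⟩
  have hf : ∀ i, ∀ v ∈ (S i).1, f v = i := by
    intro i v hv
    have h : ∃ i, v ∈ (S i).1 := ⟨i, hv⟩
    simp only [f, dif_pos h]
    by_contra hne
    exact disjoint_left.1 (hS hne) h.choose_spec hv
  let W := univ.biUnion fun i => (S i).1
  have hW : ∀ v, v ∈ W ↔ ∃ i, v ∈ (S i).1 := by simp [W]
  have hproper : IsProperOn G W f := by
    intro u hu w hw hadj hfuw
    obtain ⟨i, hui⟩ := (hW u).1 hu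
    obtain ⟨j, hwj⟩ := (hW w).1 hw
    rw [hf i u hui, hf j w hwj] at hfuw
    exact (S i).2 hui (hfuw ▸ hwj) hadj
  refine ⟨W, f, hproper, prod_congr rfl fun c _ => congrArg X (Subtype.ext ?_)⟩
  ext v
  simp only [colorClassOn, mem_filter, hW]
  constructor
  · rintro ⟨⟨i, hvi⟩, rfl⟩
    rwa [hf i v hvi]
  · exact fun hvc => ⟨⟨c, hvc⟩, hf c v hvc⟩

lemma idealJ_le_ker_vertexMap : idealJ K G ≤ RingHom.ker (vertexMap G K) := by
  rw [idealJ, Ideal.span_le]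
  rintro _ ⟨S₁, S₂, S₃, S₄, h₁₂, h₃₄, h, rfl⟩
  simp [vertexMap_X, ← prod_union h₁₂, ← prod_union h₃₄, h]

lemma idealM_le_comap_vertexMap :
    idealM K G ≤ (Ideal.span (Set.range fun i => X i ^ 2)).comap (vertexMap G K) := by
  rw [idealM, Ideal.span_le]
  rintro _ ⟨S, T, ⟨i, hi⟩, rfl⟩
  rw [mem_inter] at hi
  have h : vertexMap G K (X S * X T) =
      X i ^ 2 * ((∏ j ∈ S.1.erase i, X j) * ∏ j ∈ T.1.erase i, X j) := by
    simp only [map_mul, vertexMap_X, ← mul_prod_erase _ _ hi.1, ← mul_prod_erase _ _ hi.2]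
    ring
  simp only [SetLike.mem_coe, Ideal.mem_comap, h]
  exact Ideal.mul_mem_right _ _ (Ideal.subset_span ⟨i, rfl⟩)

lemma kempeIdeal_le_comap_vertexMap :
    kempeIdeal K G ≤ (Ideal.span (Set.range fun i => X i ^ 2)).comap (vertexMap G K) :=
  sup_le ((idealJ_le_ker_vertexMap G K).trans (Ideal.comap_mono bot_le))
    (idealM_le_comap_vertexMap G K)

variable [Fintype V]

lemma linearIndependent_mk_xMonomialOn (f : Finset V → V → Fin k)
    (hf : ∀ W, IsProperOn G W (f W)) :
    LinearIndependent K fun W =>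
      Ideal.Quotient.mkₐ K (kempeIdeal K G) (xMonomialOn G K W (f W) (hf W)) := by
  rw [Fintype.linearIndependent_iff]
  intro c hc W₀
  have hmem : ∑ W, c W • xMonomialOn G K W (f W) (hf W) ∈ kempeIdeal K G := by
    rw [← Ideal.Quotient.eq_zero_iff_mem, ← Ideal.Quotient.mkₐ_eq_mk K]
    simpa [map_sum] using hc
  have h := coeff_eq_zero_of_mem_span_X_sq (m := ∑ i ∈ W₀, Finsupp.single i 1)
    (fun i => by by_cases hi : i ∈ W₀ <;> simp [Finsupp.finsetSum_apply, Finsupp.single_apply, hi])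
    (kempeIdeal_le_comap_vertexMap G K hmem)
  simpa [map_sum, vertexMap_xMonomialOn, coeff_sum, coeff_prod_X_sum_single] using h

variable [DecidableRel G.Adj]

lemma mk_prod_X_mem_span (hk : G.maxDegree < k) (f : Finset V → V → Fin k)
    (hf : ∀ W, IsProperOn G W (f W)) (S : Fin k → StableSet G) :
    Ideal.Quotient.mkₐ K (kempeIdeal K G) (∏ i, X (S i)) ∈ Submodule.span K (Set.range fun W =>
      Ideal.Quotient.mkₐ K (kempeIdeal K G) (xMonomialOn G K W (f W) (hf W))) := by
  by_cases hS : Pairwise fun i j => Disjoint (S i).1 (S j).1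
  · obtain ⟨W, g, hg, hgS⟩ := exists_xMonomialOn_eq_prod_X G K (Nat.zero_lt_of_lt hk) hS
    have hgf : Ideal.Quotient.mkₐ K (kempeIdeal K G) (xMonomialOn G K W g hg) =
        Ideal.Quotient.mkₐ K (kempeIdeal K G) (xMonomialOn G K W (f W) (hf W)) := by
      rw [Ideal.Quotient.mkₐ_eq_mk, Ideal.Quotient.eq]
      exact idealJ_le_kempeIdeal G K ((twoColorEquiv_of_maxDegree_lt hk W hg
        (hf W)).xMonomialOn_sub_mem_idealJ G K hg (hf W))
    rw [← hgS, hgf]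
    exact Submodule.subset_span ⟨W, rfl⟩
  · simp only [Pairwise, not_forall, not_disjoint_iff_nonempty_inter] at hS
    obtain ⟨i, j, hij, hSij⟩ := hS
    rw [Ideal.Quotient.mkₐ_eq_mk, Ideal.Quotient.eq_zero_iff_mem.2
      (idealM_le_kempeIdeal G K (prod_X_mem_idealM G K hij hSij))]
    exact zero_mem _

lemma map_homogeneousSubmodule_eq_span (hk : G.maxDegree < k) (f : Finset V → V → Fin k)
    (hf : ∀ W, IsProperOn G W (f W)) :
    (homogeneousSubmodule (StableSet G) K k).map
        (Ideal.Quotient.mkₐ K (kempeIdeal K G)).toLinearMap =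
      Submodule.span K (Set.range fun W =>
        Ideal.Quotient.mkₐ K (kempeIdeal K G) (xMonomialOn G K W (f W) (hf W))) := by
  rw [homogeneousSubmodule_eq_span_prod_X, Submodule.map_span, ← Set.range_comp]
  refine le_antisymm (Submodule.span_le.2 ?_) (Submodule.span_le.2 ?_)
  · rintro _ ⟨S, rfl⟩
    exact mk_prod_X_mem_span G K hk f hf S
  · rintro _ ⟨W, rfl⟩
    exact Submodule.subset_span ⟨_, rfl⟩

end KempeRing

theorem hilbertFn_kempeIdeal_eventually_const {d : ℕ} (G : SimpleGraph (Fin d))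
    [DecidableRel G.Adj] (K : Type) [Field K] :
    ∀ k : ℕ, G.maxDegree + 1 ≤ k → hilbertFn K G (kempeIdeal K G) k = 2 ^ d := by
  intro k hk
  choose f hf using exists_isProperOn (G := G) hk
  rw [hilbertFn, map_homogeneousSubmodule_eq_span G K hk f hf,
    finrank_span_eq_card (linearIndependent_mk_xMonomialOn G K f hf), Fintype.card_finset,
    Fintype.card_fin]
end
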